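/- arXiv:1201.0355 — 2 statements merged into one kernel-verified Lean document; each statement's English description precedes it below -/
import Mathlib

section
/- Let σ_{αβ} (1 ≤ α < β ≤ k) be the weight of Λ²V with 1 in positions α, β and 0 elsewhere, let λ be dominant integral for sl(k,ℝ) and ρ = (k−1, k−2, …, 1, 0). If λ_(ij) is dominant integral, then the only pair (α,β) for which σ_{αβ} + λ + ρ lies in the Weyl orbit of λ_(ij) + ρ is (α,β) = (i,j), and in that case σ_{ij} + λ + ρ = λ_(ij) + ρ itself is dominant. -/
/-!
Since `λ + ρ` is strictly decreasing and `σ_{αβ}` is a `0/1` vector, `σ_{αβ} + λ + ρ` is weakly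
decreasing, while `λ_(ij) + ρ` is strictly decreasing. If a permutation carries one to the other,
the first is injective, hence strictly decreasing too, and two strictly decreasing sequences with
the same set of values are equal. Comparing coordinates gives `σ_{αβ} = σ_{ij}`.
-/

theorem Antitone.eq_of_comp_perm_eq {α β : Type*} [LinearOrder α] [WellFoundedGT α]
    [PartialOrder β] {f g : α → β} (hf : Antitone f) (hg : StrictAnti g) (w : Equiv.Perm α)
    (h : f ∘ w = g) : f = g := by
  have hfg : f = g ∘ w.symm := by rw [← h]; ext; simp
  have hf' : StrictAnti f :=
    hf.strictAnti_of_injective (hfg ▸ hg.injective.comp w.symm.injective)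
  exact (hf'.range_inj hg).mp (by rw [← h, EquivLike.range_comp])

theorem Antitone.add_add_strictAnti_of_nonneg_of_le_one {α : Type*} [PartialOrder α]
    {f e ρ : α → ℤ} (hf : Antitone f) (hρ : StrictAnti ρ) (he₀ : ∀ a, 0 ≤ e a)
    (he₁ : ∀ a, e a ≤ 1) :
    Antitone (fun a => f a + e a + ρ a) := by
  intro a b hab
  rcases hab.eq_or_lt with rfl | hlt
  · exact le_rfl
  · linarith [hf hab, hρ hlt, he₀ a, he₁ b]

theorem eq_and_eq_of_forall_or_iff {α : Type*} [LinearOrder α] {a b c d : α}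
    (h : ∀ x, x = a ∨ x = b ↔ x = c ∨ x = d) (hab : a < b) (hcd : c < d) : a = c ∧ b = d := by
  have := h a; have := h b; have := h c; have := h d
  grind

theorem ite_add_ite_eq_ite_or {α R : Type*} [DecidableEq α] [AddZeroClass R] [One R]
    {i j : α} (hij : i ≠ j) (a : α) :
    ((if a = i then 1 else 0) + (if a = j then 1 else 0) : R) =
      if a = i ∨ a = j then 1 else 0 := by
  by_cases hi : a = i
  · simp [hi, hij]
  · simp [hi]

def rho (k : ℕ) (a : Fin k) : ℤ := (k : ℤ) - 1 - (a : ℕ)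

theorem rho_strictAnti (k : ℕ) : StrictAnti (rho k) := fun a b hab => by
  have : (a : ℕ) < b := hab
  simp only [rho]
  omega

/-- Among the weights `σ_{αβ}` (α < β) of `Λ²V`, the only one for which
`σ_{αβ} + λ + ρ` lies in the `S_k`-orbit (coordinate permutations) of
`λ_(ij) + ρ` is `σ_{ij}`, and in that case `σ_{ij} + λ + ρ = λ_(ij) + ρ`
is itself (strictly) dominant.  Here `ρ = (k-1, k-2, …, 1, 0)`. -/
theorem only_sigma_ij_contributes
    {k : ℕ} (i j : Fin k) (hij : i < j)
    (lam : Fin k → ℤ)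
    (hlam : ∀ a b : Fin k, a ≤ b → lam b ≤ lam a)
    (lamij : Fin k → ℤ)
    (hlamij : ∀ a, lamij a =
      lam a + (if a = i then 1 else 0) + (if a = j then 1 else 0))
    (hdomij : ∀ a b : Fin k, a ≤ b → lamij b ≤ lamij a) :
    (∀ α β : Fin k, α < β →
      ((∃ w : Equiv.Perm (Fin k),
          ((fun a => lam a + (if a = α ∨ a = β then 1 else 0)
              + ((k : ℤ) - 1 - (a : ℕ))) ∘ w)
            = fun a => lamij a + ((k : ℤ) - 1 - (a : ℕ)))
        ↔ (α = i ∧ β = j)))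
    ∧ StrictAnti (fun a : Fin k =>
        lam a + (if a = i ∨ a = j then 1 else 0) + ((k : ℤ) - 1 - (a : ℕ)))
    ∧ (fun a : Fin k =>
        lam a + (if a = i ∨ a = j then 1 else 0) + ((k : ℤ) - 1 - (a : ℕ)))
      = fun a => lamij a + ((k : ℤ) - 1 - (a : ℕ)) := by
  have hlamij' : ∀ a, lamij a = lam a + if a = i ∨ a = j then 1 else 0 := fun a => by
    rw [hlamij, add_assoc, ite_add_ite_eq_ite_or hij.ne]
  have hσij : (fun a : Fin k => lam a + (if a = i ∨ a = j then 1 else 0) + rho k a)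
      = fun a => lamij a + rho k a := by
    simp only [hlamij']
  have hμ : StrictAnti (fun a => lamij a + rho k a) :=
    Antitone.add_strictAnti (fun a b => hdomij a b) (rho_strictAnti k)
  refine ⟨fun α β hαβ => ⟨fun ⟨w, hw⟩ => ?_, ?_⟩, hσij ▸ hμ, hσij⟩
  · have hg : Antitone (fun a => lam a + (if a = α ∨ a = β then 1 else 0) + rho k a) :=
      Antitone.add_add_strictAnti_of_nonneg_of_le_one (fun a b => hlam a b) (rho_strictAnti k)
        (fun a => by split_ifs <;> norm_num) (fun a => by split_ifs <;> norm_num)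
    have hgμ := hg.eq_of_comp_perm_eq hμ w hw
    refine eq_and_eq_of_forall_or_iff (fun a => ?_) hαβ hij
    have ha := congrFun hgμ a
    simp only [hlamij', add_left_inj, add_right_inj] at ha
    split_ifs at ha <;> simp_all
  · rintro ⟨rfl, rfl⟩
    exact ⟨1, hσij⟩
end

section
/- Equivariant function derivative along horizontal fields: Let G be a Lie group with Lie subalgebra decomposition g = g_− ⊕ p where g_− is nilpotent, let P = exp(p)-type closed subgroup so that every element of an open set of G is uniquely exp(Y)p with Y ∈ g_−, p ∈ P. For Z ∈ g define f_Z(exp(Y)p) = Ad(p⁻¹)Z. Then for X ∈ g_−, the derivative of f_Z along the vector field X̂ (tangent at exp(Y)p to t ↦ exp(Y)exp(tX)p) is zero; and for Z' ∈ p_+, the derivative of f_Z along Ẑ' equals f_{[Z,Z']}. -/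
/-!
On `g₋` all triple products vanish, so `exp` is a quadratic polynomial there and the
Baker–Campbell–Hausdorff formula stops after the commutator term:
`exp Y * exp (s • X) = exp (Y + s • X + ½ [Y, s • X])`, whose exponent lies in `g₋` again.
Hence `f_Z` is constant along `X̂`. Along `Ẑ'` the factor `exp (s • Z') * p` stays in `P`,
so `f_Z` becomes `s ↦ p⁻¹ exp (-s Z') Z exp (s Z') p`, whose derivative at `0` is
`p⁻¹ [Z, Z'] p = f_{[Z,Z']}(exp Y * p)`.
-/

open NormedSpace Nat

namespace NormedSpace

variable {A : Type*} [NormedRing A] [NormedAlgebra ℝ A]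

theorem exp_eq_sum_range_of_pow_eq_zero {a : A} {n : ℕ} (h : a ^ n = 0) :
    exp a = ∑ k ∈ Finset.range n, (k !⁻¹ : ℝ) • a ^ k := by
  rw [exp_eq_tsum ℝ]
  refine tsum_eq_sum fun k hk => ?_
  rw [pow_eq_zero_of_le (by simpa using hk) h, smul_zero]

theorem exp_eq_of_pow_three_eq_zero {a : A} (h : a ^ 3 = 0) :
    exp a = 1 + a + (2 : ℝ)⁻¹ • a ^ 2 := by
  simp [exp_eq_sum_range_of_pow_eq_zero h, Finset.sum_range_succ, add_assoc]

theorem exp_mul_exp_eq_exp_add_add_half_commutator (N : Submodule ℝ A)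
    (hN : ∀ a ∈ N, ∀ b ∈ N, ∀ c ∈ N, a * b * c = 0) {a b : A} (ha : a ∈ N) (hb : b ∈ N) :
    exp a * exp b = exp (a + b + (2 : ℝ)⁻¹ • (a * b - b * a)) := by
  -- `hN` in a form that `simp` can use as a conditional rewrite rule
  have cube : ∀ x y z : A, x ∈ N → y ∈ N → z ∈ N → x * y * z = 0 :=
    fun x y z hx hy hz => hN x hx y hy z hz
  have hW : (a + b + (2 : ℝ)⁻¹ • (a * b - b * a)) ^ 3 = 0 := by
    simp [pow_succ, mul_add, add_mul, mul_sub, sub_mul, ← mul_assoc, cube, ha, hb]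
  rw [exp_eq_of_pow_three_eq_zero hW, exp_eq_of_pow_three_eq_zero (by simp [pow_succ, cube, ha]),
    exp_eq_of_pow_three_eq_zero (by simp [pow_succ, cube, hb])]
  simp only [pow_succ, pow_zero, one_mul, mul_add, mul_one, add_mul, Algebra.smul_mul_assoc,
    Algebra.mul_smul_comm, ← mul_assoc, mul_sub, sub_mul, ha, hb, cube, smul_zero, add_zero,
    sub_self, smul_add]
  module

variable [CompleteSpace A]

theorem exp_neg_mul_exp_self (x : A) : exp (-x) * exp x = 1 := by
  let +nondep : NormedAlgebra ℚ A := .restrictScalars ℚ ℝ A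
  rw [← exp_add_of_commute (Commute.refl x).neg_left, neg_add_cancel, exp_zero]

theorem _root_.Units.val_inv_eq_of_val_eq_exp_mul {x : A} {p q : Aˣ}
    (hq : (q : A) = exp x * p) : ((q⁻¹ : Aˣ) : A) = ↑p⁻¹ * exp (-x) :=
  Units.inv_eq_of_mul_eq_one_left <| by
    rw [hq, mul_assoc, ← mul_assoc (exp (-x)), exp_neg_mul_exp_self, one_mul, Units.inv_mul]

theorem hasDerivAt_exp_neg_smul_mul_mul_exp_smul (W Z : A) :
    HasDerivAt (fun s : ℝ => exp (-(s • W)) * Z * exp (s • W)) (Z * W - W * Z) 0 := by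
  have hneg : HasDerivAt (fun s : ℝ => exp (-(s • W))) (-W) 0 := by
    simpa using hasDerivAt_exp_smul_const (𝕂 := ℝ) (-W) 0
  have hpos : HasDerivAt (fun s : ℝ => exp (s • W)) W 0 := by
    simpa using hasDerivAt_exp_smul_const (𝕂 := ℝ) W 0
  refine ((hneg.mul_const Z).mul hpos).congr_deriv ?_
  simp only [zero_smul, neg_zero, exp_zero, mul_one]
  noncomm_ring

end NormedSpace

/-- Derivatives of the `P`-equivariant functions `f_Z` along the preferred vector
fields.  `A` is the (matrix) algebra containing the group and its Lie algebra,
`gneg` is the 2-step nilpotent subalgebra `g₋` (so triple products vanish and it is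
closed under the commutator), `pplus ⊆ p` consists of directions whose exponentials
stay in the parabolic subgroup `P`, and `f Z g = Ad(p⁻¹)Z = p⁻¹ Z p` whenever
`g = exp(Y)·p` with `Y ∈ g₋`, `p ∈ P`.  Then:
(1) the derivative of `f_Z` along `t ↦ exp(Y)exp(tX)p` vanishes for `X ∈ g₋`, and
(2) the derivative along `t ↦ exp(Y)exp(tZ')p` at `0` equals
`f_{[Z,Z']}(exp(Y)p)` for `Z' ∈ p₊`. -/
theorem equivariant_function_derivatives
    {A : Type*} [NormedRing A] [NormedAlgebra ℝ A] [CompleteSpace A]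
    (gneg pplus : Submodule ℝ A)
    (hnil : ∀ a ∈ gneg, ∀ b ∈ gneg, ∀ c ∈ gneg, a * b * c = 0)
    (hbr : ∀ a ∈ gneg, ∀ b ∈ gneg, a * b - b * a ∈ gneg)
    (P : Subgroup Aˣ)
    (f : A → A → A)
    (hf : ∀ Z : A, ∀ Y ∈ gneg, ∀ p : Aˣ, p ∈ P →
      f Z (exp Y * ↑p) = ↑p⁻¹ * Z * ↑p)
    (hPexp : ∀ W ∈ pplus, ∀ t : ℝ, ∀ p : Aˣ, p ∈ P →
      ∃ q : Aˣ, q ∈ P ∧ (q : A) = exp (t • W) * ↑p)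
    (Z Y : A) (hY : Y ∈ gneg) (p : Aˣ) (hp : p ∈ P) :
    (∀ X ∈ gneg, ∀ t : ℝ,
      deriv (fun s : ℝ => f Z (exp Y * exp (s • X) * ↑p)) t = 0)
    ∧ (∀ Z' ∈ pplus,
      deriv (fun s : ℝ => f Z (exp Y * exp (s • Z') * ↑p)) 0
        = f (Z * Z' - Z' * Z) (exp Y * ↑p)) := by
  constructor
  · intro X hX t
    have hconst : (fun s : ℝ => f Z (exp Y * exp (s • X) * ↑p)) = fun _ => ↑p⁻¹ * Z * ↑p := by
      funext s
      have hsX : s • X ∈ gneg := gneg.smul_mem s hX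
      rw [exp_mul_exp_eq_exp_add_add_half_commutator gneg hnil hY hsX,
        hf Z _ (add_mem (add_mem hY hsX) (gneg.smul_mem _ (hbr Y hY _ hsX))) p hp]
    rw [hconst, deriv_const]
  · intro Z' hZ'
    have hconj : (fun s : ℝ => f Z (exp Y * exp (s • Z') * ↑p))
        = fun s : ℝ => ↑p⁻¹ * (exp (-(s • Z')) * Z * exp (s • Z')) * ↑p := by
      funext s
      obtain ⟨q, hq, hqv⟩ := hPexp Z' hZ' s p hp
      rw [mul_assoc, ← hqv, hf Z Y hY q hq, Units.val_inv_eq_of_val_eq_exp_mul hqv, hqv]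
      simp only [mul_assoc]
    rw [hconj, hf _ Y hY p hp,
      (((hasDerivAt_exp_neg_smul_mul_mul_exp_smul Z' Z).const_mul _).mul_const _).deriv]
end
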